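/- arXiv:2001.05947 — 5 statements merged into one kernel-verified Lean document; each statement's English description precedes it below -/
import Mathlib

section
/- Let E be a compact Hausdorff semigroup with continuous left multiplications, M a minimal right ideal, and v ∈ M an idempotent. Then Mv is a group with identity element v. -/
/-!
Every `x` in the minimal right ideal `M` satisfies `x * E = M`: the set `x * E` is a right ideal
inside `M`, closed as the continuous image of the compact space `E`, so minimality applies.
Hence `v` is a left identity on `M`, and every `x ∈ M * v` has some `e` with `x * e = v`, so that
`v * e * v ∈ M * v` is a right inverse of `x`. A set in which every element has a right inverse
with respect to a right identity is a group.
-/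

open Set

section RightIdeal

variable {E : Type*} [Semigroup E]

def IsRightIdeal (S : Set E) : Prop := ∀ m ∈ S, ∀ e : E, m * e ∈ S

lemma isRightIdeal_range_mul_left (x : E) : IsRightIdeal (range (x * ·)) := by
  rintro _ ⟨e, rfl⟩ e'
  exact ⟨e * e', (mul_assoc x e e').symm⟩

lemma range_mul_left_eq_of_minimal [TopologicalSpace E] {M : Set E} (hM : IsRightIdeal M)
    (hmin : ∀ M' : Set E, M'.Nonempty → IsClosed M' → IsRightIdeal M' → M' ⊆ M → M' = M)
    {x : E} (hx : x ∈ M) (hclosed : IsClosed (range (x * ·))) :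
    range (x * ·) = M :=
  hmin _ ⟨x * x, x, rfl⟩ hclosed (isRightIdeal_range_mul_left x) (range_subset_iff.2 (hM x hx))

lemma mul_eq_self_of_mem_range_mul_left {v x : E} (hvi : v * v = v) (hx : x ∈ range (v * ·)) :
    v * x = x := by
  obtain ⟨e, rfl⟩ := hx
  rw [← mul_assoc, hvi]

lemma mul_eq_self_of_mem_image_mul_right {v x : E} {M : Set E} (hvi : v * v = v)
    (hx : x ∈ (· * v) '' M) : x * v = x := by
  obtain ⟨m, -, rfl⟩ := hx
  rw [mul_assoc, hvi]

lemma image_mul_right_subset {M : Set E} (hM : IsRightIdeal M) (v : E) : (· * v) '' M ⊆ M := by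
  rintro _ ⟨m, hm, rfl⟩
  exact hM m hm v

lemma mul_mem_image_mul_right {M : Set E} (hM : IsRightIdeal M) {v x y : E}
    (hx : x ∈ (· * v) '' M) (hy : y ∈ (· * v) '' M) : x * y ∈ (· * v) '' M := by
  obtain ⟨m, hm, rfl⟩ := hx
  obtain ⟨n, -, rfl⟩ := hy
  exact ⟨m * v * n, hM _ (hM m hm v) n, by simp only [mul_assoc]⟩

lemma exists_mul_eq_of_mem_image_mul_right {M : Set E} (hM : IsRightIdeal M)
    (hrange : ∀ x ∈ M, range (x * ·) = M) {v x : E} (hv : v ∈ M) (hvi : v * v = v)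
    (hx : x ∈ (· * v) '' M) : ∃ y ∈ (· * v) '' M, x * y = v := by
  obtain ⟨e, he⟩ : ∃ e, x * e = v := by
    rw [← mem_range, hrange x (image_mul_right_subset hM v hx)]
    exact hv
  refine ⟨v * e * v, ⟨v * e, hM v hv e, rfl⟩, ?_⟩
  calc x * (v * e * v) = (x * v) * e * v := by simp only [mul_assoc]
    _ = v := by rw [mul_eq_self_of_mem_image_mul_right hvi hx, he, hvi]

lemma exists_mul_eq_and_mul_eq_of_exists_mul_eq {G : Set E} {v : E}
    (hright : ∀ x ∈ G, x * v = x) (hinv : ∀ x ∈ G, ∃ y ∈ G, x * y = v)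
    {x : E} (hx : x ∈ G) : ∃ y ∈ G, x * y = v ∧ y * x = v := by
  obtain ⟨y, hy, hxy⟩ := hinv x hx
  obtain ⟨z, -, hyz⟩ := hinv y hy
  refine ⟨y, hy, hxy, ?_⟩
  calc y * x = y * x * (y * z) := by rw [hyz, mul_assoc, hright x hx]
    _ = y * (x * y) * z := by simp only [mul_assoc]
    _ = v := by rw [hxy, hright y hy, hyz]

end RightIdeal

theorem stmt2_general {E : Type*} [Semigroup E] [TopologicalSpace E] [CompactSpace E] [T2Space E]
    (hleft : ∀ p : E, Continuous fun q : E => p * q)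
    (M : Set E)
    (hMideal : ∀ m ∈ M, ∀ e : E, m * e ∈ M)
    (hmin : ∀ M' : Set E, M'.Nonempty → IsClosed M' → (∀ m ∈ M', ∀ e : E, m * e ∈ M') →
      M' ⊆ M → M' = M)
    (v : E) (hv : v ∈ M) (hvi : v * v = v) :
    v ∈ (fun m => m * v) '' M ∧
    (∀ x ∈ (fun m => m * v) '' M, ∀ y ∈ (fun m => m * v) '' M, x * y ∈ (fun m => m * v) '' M) ∧
    (∀ x ∈ (fun m => m * v) '' M, v * x = x ∧ x * v = x) ∧
    (∀ x ∈ (fun m => m * v) '' M, ∃ y ∈ (fun m => m * v) '' M, x * y = v ∧ y * x = v) := by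
  have hrange : ∀ x ∈ M, range (x * ·) = M := fun x hx =>
    range_mul_left_eq_of_minimal hMideal hmin hx (isCompact_range (hleft x)).isClosed
  have hright : ∀ x ∈ (· * v) '' M, x * v = x := fun x hx =>
    mul_eq_self_of_mem_image_mul_right hvi hx
  refine ⟨⟨v, hv, hvi⟩, fun x hx y hy => mul_mem_image_mul_right hMideal hx hy,
    fun x hx => ⟨?_, hright x hx⟩, fun x hx => ?_⟩
  · apply mul_eq_self_of_mem_range_mul_left hvi
    rw [hrange v hv]
    exact image_mul_right_subset hMideal v hx
  · exact exists_mul_eq_and_mul_eq_of_exists_mul_eq hright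
      (fun y hy => exists_mul_eq_of_mem_image_mul_right hMideal hrange hv hvi hy) hx

/-- In a compact Hausdorff right-topological semigroup with minimal right ideal `M` and
idempotent `v ∈ M`, the set `M * v` is a group with identity `v`. -/
theorem stmt2 {E : Type*} [Semigroup E] [TopologicalSpace E] [CompactSpace E] [T2Space E]
    (hleft : ∀ p : E, Continuous fun q : E => p * q)
    (M : Set E) (hMne : M.Nonempty) (hMcl : IsClosed M)
    (hMideal : ∀ m ∈ M, ∀ e : E, m * e ∈ M)
    (hmin : ∀ M' : Set E, M'.Nonempty → IsClosed M' → (∀ m ∈ M', ∀ e : E, m * e ∈ M') →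
      M' ⊆ M → M' = M)
    (v : E) (hv : v ∈ M) (hvi : v * v = v) :
    v ∈ (fun m => m * v) '' M ∧
    (∀ x ∈ (fun m => m * v) '' M, ∀ y ∈ (fun m => m * v) '' M, x * y ∈ (fun m => m * v) '' M) ∧
    (∀ x ∈ (fun m => m * v) '' M, v * x = x ∧ x * v = x) ∧
    (∀ x ∈ (fun m => m * v) '' M, ∃ y ∈ (fun m => m * v) '' M, x * y = v ∧ y * x = v) :=
  stmt2_general hleft M hMideal hmin v hv hvi
end

section
/- Let (μ(n)) denote the Möbius function and suppose that for every bounded sequence g arising as a translation-orbit-closure observation of a Veech function, (1/N) Σ_{n≤N} μ(n) g(n) → 0. Then for any increasing sequence of reals (x_n) with x_{n+1} − x_n → ∞, one has Σ_{k=1}^{n} |M(x_{k+1}) − M(x_k)| = o(x_{n+1}), where M(x) = Σ_{m≤x} μ(m) is the Mertens function. More concretely: if for every sequence (ε_k) ∈ {−1,1}^ℕ the step function f(m) = Σ_k ε_k 1_{[x_k, x_{k+1})}(m) satisfies (1/X) Σ_{m≤X} μ(m) f(m) → 0, then Σ_{k=1}^{n} |M(x_{k+1}) − M(x_k)| = o(x_{n+1}).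 -/
/-!
Choose `ε k` to be the sign of `M (x (k + 1)) - M (x k)`. Summing `μ(m) * stepFunction x ε m`
over the integers `m < x (n + 1)` block by block gives `∑ k ≤ n, ε k ∑_{m ∈ [x k, x (k + 1))} μ(m)`,
and each inner sum differs from `M (x (k + 1)) - M (x k)` by at most two boundary terms. Hence
`∑ k ≤ n, |M (x (k + 1)) - M (x k)|` is at most `o(x (n + 1)) + 2 (n + 1)`, and `n = o(x n)`
because the gaps tend to infinity.
-/

open Filter Finset

lemma tendsto_div_natCast_atTop_of_tendsto_sub_atTop {x : ℕ → ℝ}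
    (h : Tendsto (fun n => x (n + 1) - x n) atTop atTop) :
    Tendsto (fun n => x n / n) atTop atTop := by
  refine tendsto_atTop.2 fun C => ?_
  -- Cesàro averages of the gaps truncated at `C + 1` tend to `C + 1` and bound `x n / n` below.
  set u : ℕ → ℝ := fun i => min (x (i + 1) - x i) (C + 1)
  have hu : Tendsto u atTop (nhds (C + 1)) :=
    tendsto_const_nhds.congr' <| (h.eventually_ge_atTop (C + 1)).mono fun i hi =>
      (min_eq_right hi).symm
  have hlim : Tendsto (fun n : ℕ => x 0 / n + (n : ℝ)⁻¹ * ∑ i ∈ range n, u i) atTop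
      (nhds (C + 1)) := by
    simpa using (tendsto_const_div_atTop_nhds_zero_nat (x 0)).add hu.cesaro
  filter_upwards [hlim.eventually_const_le (lt_add_one C), eventually_gt_atTop 0] with n hn hn0
  have hsum : ∑ i ∈ range n, u i ≤ x n - x 0 := by
    rw [← sum_range_sub x]
    exact sum_le_sum fun i _ => min_le_left _ _
  calc C ≤ x 0 / n + (n : ℝ)⁻¹ * ∑ i ∈ range n, u i := hn
    _ ≤ x 0 / n + (n : ℝ)⁻¹ * (x n - x 0) := by gcongr
    _ = x n / n := by field_simp; ring

lemma tendsto_atTop_of_tendsto_sub_atTop {x : ℕ → ℝ}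
    (h : Tendsto (fun n => x (n + 1) - x n) atTop atTop) : Tendsto x atTop atTop :=
  ((tendsto_div_natCast_atTop_of_tendsto_sub_atTop h).atTop_mul_atTop₀
    tendsto_natCast_atTop_atTop).congr' <| (eventually_ne_atTop 0).mono fun _ hn =>
      div_mul_cancel₀ _ (Nat.cast_ne_zero.2 hn)

lemma exists_eq_one_or_eq_neg_one_mul_eq_abs (d : ℝ) :
    ∃ s : ℝ, (s = 1 ∨ s = -1) ∧ s * d = |d| := by
  rcases le_total 0 d with h | h
  · exact ⟨1, Or.inl rfl, by rw [one_mul, abs_of_nonneg h]⟩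
  · exact ⟨-1, Or.inr rfl, by rw [abs_of_nonpos h, neg_one_mul]⟩

noncomputable def summatory (f : ℕ → ℝ) (r : ℝ) : ℝ :=
  ∑ m ∈ range (⌊r⌋₊ + 1), f m

noncomputable def stepFunction (x ε : ℕ → ℝ) (t : ℝ) : ℝ :=
  ∑' k, (Set.Ico (x k) (x (k + 1))).indicator (fun _ => ε k) t

section Blocks

variable {f : ℕ → ℝ}

lemma sum_Icc_one_eq_sum_range_succ (h0 : f 0 = 0) (N : ℕ) :
    ∑ m ∈ Icc 1 N, f m = ∑ m ∈ range (N + 1), f m := by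
  rw [range_eq_Ico, sum_eq_sum_Ico_succ_bot N.succ_pos, h0, zero_add, zero_add,
    Nat.succ_eq_add_one, Ico_add_one_right_eq_Icc]

lemma abs_sum_range_ceil_sub_summatory_le (hf : ∀ m, |f m| ≤ 1) (r : ℝ) :
    |∑ m ∈ range ⌈r⌉₊, f m - summatory f r| ≤ 1 := by
  rcases (Nat.ceil_le_floor_add_one r).eq_or_lt with h | h
  · simp [summatory, h]
  · rw [summatory, show ⌈r⌉₊ = ⌊r⌋₊ by have := Nat.floor_le_ceil r; omega, sum_range_succ]
    simpa using hf ⌊r⌋₊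

lemma abs_sum_Ico_ceil_sub_summatory_sub_le (hf : ∀ m, |f m| ≤ 1) {a b : ℝ} (hab : a ≤ b) :
    |∑ m ∈ Ico ⌈a⌉₊ ⌈b⌉₊, f m - (summatory f b - summatory f a)| ≤ 2 := by
  have ha := abs_le.1 (abs_sum_range_ceil_sub_summatory_le hf a)
  have hb := abs_le.1 (abs_sum_range_ceil_sub_summatory_le hf b)
  rw [sum_Ico_eq_sub _ (Nat.ceil_mono hab), abs_le]
  constructor <;> linarith [ha.1, ha.2, hb.1, hb.2]

variable {x ε : ℕ → ℝ}

lemma stepFunction_eq_sum (hx : Monotone x) {t : ℝ} {n : ℕ} (ht : t < x (n + 1)) :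
    stepFunction x ε t =
      ∑ k ∈ range (n + 1), (Set.Ico (x k) (x (k + 1))).indicator (fun _ => ε k) t :=
  tsum_eq_sum fun k hk => Set.indicator_of_notMem
    (fun hmem => ht.not_ge <| (hx (by simpa using hk)).trans hmem.1) _

lemma sum_range_ceil_mul_stepFunction (hx : Monotone x) (n : ℕ) :
    ∑ m ∈ range ⌈x (n + 1)⌉₊, f m * stepFunction x ε m =
      ∑ k ∈ range (n + 1), ε k * ∑ m ∈ Ico ⌈x k⌉₊ ⌈x (k + 1)⌉₊, f m := by
  calc _ = ∑ k ∈ range (n + 1), ∑ m ∈ range ⌈x (n + 1)⌉₊,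
        f m * (Set.Ico (x k) (x (k + 1))).indicator (fun _ => ε k) (m : ℝ) := by
        rw [sum_comm]
        refine sum_congr rfl fun m hm => ?_
        rw [stepFunction_eq_sum hx (Nat.lt_ceil.1 (mem_range.1 hm)), mul_sum]
    _ = _ := sum_congr rfl fun k hk => ?_
  have hblock : Ico ⌈x k⌉₊ ⌈x (k + 1)⌉₊ =
      {m ∈ range ⌈x (n + 1)⌉₊ | ((m : ℕ) : ℝ) ∈ Set.Ico (x k) (x (k + 1))} := by
    ext m
    simp only [mem_Ico, mem_filter, mem_range, Set.mem_Ico, Nat.ceil_le, Nat.lt_ceil]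
    exact ⟨fun h => ⟨h.2.trans_le (hx (by simpa using hk)), h⟩, And.right⟩
  rw [mul_sum, hblock, sum_filter]
  refine sum_congr rfl fun m _ => ?_
  simp only [Set.indicator_apply, mul_ite, mul_zero, mul_comm]

end Blocks

section Estimate

variable {f x ε : ℕ → ℝ}

lemma sum_range_abs_summatory_sub_le (hf : ∀ m, |f m| ≤ 1) (hx : Monotone x)
    (hε : ∀ k, ε k = 1 ∨ ε k = -1)
    (hεD : ∀ k, ε k * (summatory f (x (k + 1)) - summatory f (x k)) =
      |summatory f (x (k + 1)) - summatory f (x k)|) (n : ℕ) :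
    ∑ k ∈ range (n + 1), |summatory f (x (k + 1)) - summatory f (x k)| ≤
      |∑ m ∈ range ⌈x (n + 1)⌉₊, f m * stepFunction x ε m| + 2 * (n + 1) := by
  set D := fun k => summatory f (x (k + 1)) - summatory f (x k)
  set B := fun k => ∑ m ∈ Ico ⌈x k⌉₊ ⌈x (k + 1)⌉₊, f m
  have herr : ∀ k, -(ε k * (B k - D k)) ≤ 2 := fun k => by
    have := abs_le.1 (abs_sum_Ico_ceil_sub_summatory_sub_le hf (hx k.le_succ))
    rcases hε k with h | h <;> rw [h] <;> linarith [this.1, this.2]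
  calc ∑ k ∈ range (n + 1), |D k| = ∑ k ∈ range (n + 1), (ε k * B k - ε k * (B k - D k)) :=
        sum_congr rfl fun k _ => by rw [← hεD k]; ring
    _ ≤ ∑ k ∈ range (n + 1), (ε k * B k + 2) := by gcongr with k; linarith [herr k]
    _ ≤ |∑ m ∈ range ⌈x (n + 1)⌉₊, f m * stepFunction x ε m| + 2 * (n + 1) := by
        rw [sum_add_distrib, sum_range_ceil_mul_stepFunction hx]
        simp only [sum_const, card_range, nsmul_eq_mul, Nat.cast_add, Nat.cast_one]
        linarith [le_abs_self (∑ k ∈ range (n + 1), ε k * B k)]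

lemma sum_Icc_abs_summatory_sub_div_le (hf : ∀ m, |f m| ≤ 1) (h0 : f 0 = 0)
    (hx : Monotone x) (hε : ∀ k, ε k = 1 ∨ ε k = -1)
    (hεD : ∀ k, ε k * (summatory f (x (k + 1)) - summatory f (x k)) =
      |summatory f (x (k + 1)) - summatory f (x k)|) {n : ℕ} (hxn : 1 < x (n + 1)) :
    (∑ k ∈ Icc 1 n, |summatory f (x (k + 1)) - summatory f (x k)|) / x (n + 1) ≤
      |((⌈x (n + 1)⌉₊ - 1 : ℕ) : ℝ)⁻¹ *
          ∑ m ∈ Icc 1 (⌈x (n + 1)⌉₊ - 1), f m * stepFunction x ε m| +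
        2 * ((n + 1) / x (n + 1)) := by
  set X := ⌈x (n + 1)⌉₊ - 1
  set S := ∑ m ∈ Icc 1 X, f m * stepFunction x ε m
  have hX : X + 1 = ⌈x (n + 1)⌉₊ := Nat.sub_add_cancel (Nat.one_le_ceil_iff.2 (by linarith))
  have hXpos : (0 : ℝ) < X := by
    have := Nat.lt_ceil.2 (by exact_mod_cast hxn : ((1 : ℕ) : ℝ) < x (n + 1))
    exact_mod_cast (by omega : 0 < X)
  have hXle : (X : ℝ) ≤ x (n + 1) := by
    have := Nat.ceil_lt_add_one (by linarith : 0 ≤ x (n + 1))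
    rw [← hX] at this
    push_cast at this
    linarith
  have hS : S = ∑ m ∈ range ⌈x (n + 1)⌉₊, f m * stepFunction x ε m := by
    rw [← hX]
    exact sum_Icc_one_eq_sum_range_succ (f := fun m => f m * stepFunction x ε m) (by simp [h0]) X
  have hsub : ∑ k ∈ Icc 1 n, |summatory f (x (k + 1)) - summatory f (x k)| ≤
      ∑ k ∈ range (n + 1), |summatory f (x (k + 1)) - summatory f (x k)| :=
    sum_le_sum_of_subset_of_nonneg (fun k hk => by simp at hk ⊢; omega)
      (fun _ _ _ => abs_nonneg _)
  calc (∑ k ∈ Icc 1 n, |summatory f (x (k + 1)) - summatory f (x k)|) / x (n + 1)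
      ≤ (|S| + 2 * (n + 1)) / x (n + 1) := by
        gcongr
        rw [hS]
        exact hsub.trans (sum_range_abs_summatory_sub_le hf hx hε hεD n)
    _ = |S| / x (n + 1) + 2 * ((n + 1) / x (n + 1)) := by ring
    _ ≤ |S| / X + 2 * ((n + 1) / x (n + 1)) := by gcongr
    _ = |(X : ℝ)⁻¹ * S| + 2 * ((n + 1) / x (n + 1)) := by
        rw [abs_mul, abs_inv, Nat.abs_cast, div_eq_inv_mul]

end Estimate

/-- Möbius disjointness for the ±1 step functions built on the blocks `[x_k, x_{k+1})`
implies `∑_{k=1}^n |M(x_{k+1}) − M(x_k)| = o(x_{n+1})` for the Mertens function `M`,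
whenever the gaps `x_{n+1} − x_n` tend to infinity. -/
theorem stmt11 (x : ℕ → ℝ) (hx1 : 1 ≤ x 0) (hmono : StrictMono x)
    (hgap : Tendsto (fun n : ℕ => x (n + 1) - x n) atTop atTop)
    (M : ℝ → ℝ)
    (hM : ∀ r : ℝ, M r = ∑ m ∈ Finset.Icc 1 ⌊r⌋₊, ((ArithmeticFunction.moebius m : ℤ) : ℝ))
    (hdisj : ∀ ε : ℕ → ℝ, (∀ k, ε k = 1 ∨ ε k = -1) →
      Tendsto (fun X : ℕ => (X : ℝ)⁻¹ * ∑ m ∈ Finset.Icc 1 X,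
          ((ArithmeticFunction.moebius m : ℤ) : ℝ) *
            ∑' k : ℕ, Set.indicator (Set.Ico (x k) (x (k + 1))) (fun _ => ε k) (m : ℝ))
        atTop (nhds 0)) :
    Tendsto (fun n : ℕ => (∑ k ∈ Finset.Icc 1 n, |M (x (k + 1)) - M (x k)|) / x (n + 1))
      atTop (nhds 0) := by
  set f : ℕ → ℝ := fun m => ((ArithmeticFunction.moebius m : ℤ) : ℝ)
  have hf : ∀ m, |f m| ≤ 1 := fun m => by
    simp only [f, ← Int.cast_abs]
    exact_mod_cast ArithmeticFunction.abs_moebius_le_one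
  have hMf : M = summatory f := funext fun r => by
    rw [hM, summatory, sum_Icc_one_eq_sum_range_succ (by simp)]
  subst hMf
  choose ε hε hεD using fun k =>
    exists_eq_one_or_eq_neg_one_mul_eq_abs (summatory f (x (k + 1)) - summatory f (x k))
  have hX : Tendsto (fun n => ⌈x (n + 1)⌉₊ - 1) atTop atTop :=
    (tendsto_sub_atTop_nat 1).comp <| tendsto_nat_ceil_atTop.comp <|
      (tendsto_add_atTop_iff_nat 1).2 (tendsto_atTop_of_tendsto_sub_atTop hgap)
  have hratio : Tendsto (fun n : ℕ => ((n : ℝ) + 1) / x (n + 1)) atTop (nhds 0) := by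
    refine ((tendsto_add_atTop_iff_nat 1).2
      (tendsto_div_natCast_atTop_of_tendsto_sub_atTop hgap)).inv_tendsto_atTop.congr fun n => ?_
    simp [inv_div]
  have hx_gt_one : ∀ n, 1 < x (n + 1) := fun n => hx1.trans_lt (hmono n.succ_pos)
  refine squeeze_zero
    (fun n => div_nonneg (sum_nonneg fun _ _ => abs_nonneg _) (by linarith [hx_gt_one n]))
    (fun n => sum_Icc_abs_summatory_sub_div_le hf (by simp [f]) hmono.monotone hε hεD
      (hx_gt_one n)) ?_
  have := ((hdisj ε hε).comp hX).abs.add (hratio.const_mul 2)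
  rwa [abs_zero, mul_zero, add_zero] at this
end

section
/- Assume Davenport's estimate: for every A > 0 there is C_A such that sup_{θ} |Σ_{n≤N} μ(n) e^{inθ}| ≤ C_A N / (log N)^A for N ≥ 2. Then there exist constants C > 0 and κ > 0 such that for all N ≥ 2, (1/N) Σ_{m=1}^{N} | (1/N) Σ_{n=1}^{N} μ(n) μ(n+m) | ≤ C / (log N)^κ. (The same holds for the Liouville function λ.) -/
/-!
Let `F(θ) = ∑_{n ≤ N} f(n) e^{inθ}` and `G(θ) = ∑_{p ≤ 2N} f(p) e^{ipθ}`. For `1 ≤ m ≤ N` the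
coefficient of `e^{imθ}` in `F(-θ) G(θ)` is the correlation `c_m = ∑_{n ≤ N} f(n) f(n+m)`.
All frequencies of `F(-θ) G(θ)` lie in `(-N, 2N)`, so sampling at the `3N + 1` points
`2πj / (3N + 1)` separates them, and discrete Parseval gives
`∑_m c_m² ≤ sup |F|² · ∑_{p ≤ 2N} f(p)² ≤ 2N sup |F|²`.
Cauchy–Schwarz turns this into `∑_m |c_m| ≤ √2 N sup |F|`, and Davenport's bound with `A = 1`
gives `sup |F| ≤ C N / log N`, hence `κ = 1`.
-/

open Finset Complex Real ComplexConjugate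

lemma sum_range_exp_int_mul_two_pi_div (M : ℕ) (hM : M ≠ 0) (k : ℤ) :
    ∑ j ∈ range M, exp (I * k * ↑(2 * π * j / M)) = if (M : ℤ) ∣ k then (M : ℂ) else 0 := by
  have hζ := Complex.isPrimitiveRoot_exp M hM
  set ζ := exp (2 * π * I / M)
  have hterm : ∀ j : ℕ, exp (I * k * ↑(2 * π * j / M)) = (ζ ^ k) ^ j := by
    intro j
    rw [← Complex.exp_int_mul, ← Complex.exp_nat_mul]
    push_cast
    ring_nf
  simp only [hterm]
  split_ifs with hdvd
  · simp [(hζ.zpow_eq_one_iff_dvd k).mpr hdvd]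
  · have hne : ζ ^ k ≠ 1 := mt (hζ.zpow_eq_one_iff_dvd k).mp hdvd
    rw [geom_sum_eq hne, ← zpow_natCast, ← zpow_mul, mul_comm, zpow_mul, zpow_natCast,
      hζ.pow_eq_one, one_zpow, sub_self, zero_div]

lemma sum_range_norm_sq_sum_exp {ι : Type*} (s : Finset ι) (a : ι → ℂ) (d : ι → ℤ) (M : ℕ)
    (hd : Set.InjOn d s) (hspread : ∀ x ∈ s, ∀ y ∈ s, |d x - d y| < M) :
    ∑ j ∈ range M, ‖∑ x ∈ s, a x * exp (I * d x * ↑(2 * π * j / M))‖ ^ 2 =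
      M * ∑ x ∈ s, ‖a x‖ ^ 2 := by
  obtain rfl | ⟨x₀, hx₀⟩ := s.eq_empty_or_nonempty
  · simp
  have hM : M ≠ 0 := by have := hspread x₀ hx₀ x₀ hx₀; rw [sub_self, abs_zero] at this; omega
  have hexpand : ∀ θ : ℝ, ((‖∑ x ∈ s, a x * exp (I * d x * θ)‖ ^ 2 : ℝ) : ℂ) =
      ∑ x ∈ s, ∑ y ∈ s, a x * conj (a y) * exp (I * (d x - d y : ℤ) * θ) := by
    intro θ
    rw [ofReal_pow, ← mul_conj', map_sum, sum_mul_sum]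
    refine sum_congr rfl fun x _ => sum_congr rfl fun y _ => ?_
    rw [map_mul, ← exp_conj, mul_mul_mul_comm, ← Complex.exp_add]
    simp only [map_mul, conj_I, conj_ofReal, map_intCast]
    push_cast
    ring_nf
  have hdiag : ∀ x ∈ s, ∑ y ∈ s, a x * conj (a y) *
      (if (M : ℤ) ∣ d x - d y then (M : ℂ) else 0) = M * ‖a x‖ ^ 2 := by
    intro x hx
    rw [sum_eq_single_of_mem x hx, sub_self, if_pos (dvd_zero _), mul_conj']
    · ring
    · intro y hy hyx
      have hndvd : ¬ (M : ℤ) ∣ d x - d y := fun h =>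
        hyx (hd hy hx (sub_eq_zero.mp (Int.eq_zero_of_abs_lt_dvd h (hspread x hx y hy))).symm)
      rw [if_neg hndvd, mul_zero]
  apply ofReal_injective
  simp only [ofReal_sum, ofReal_mul, ofReal_natCast, ofReal_pow, hexpand]
  rw [sum_comm, mul_sum]
  refine sum_congr rfl fun x hx => ?_
  rw [← hdiag x hx, sum_comm]
  simp only [← mul_sum, sum_range_exp_int_mul_two_pi_div M hM]

/-- The coefficient of `z^k` in `(∑_{n ≤ N} f(n) z^{-n}) (∑_{p ≤ 2N} f(p) z^p)`. -/
def productCoeff (f : ℕ → ℝ) (N : ℕ) (k : ℤ) : ℝ :=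
  ∑ x ∈ Icc 1 N ×ˢ Icc 1 (2 * N) with (x.2 : ℤ) - x.1 = k, f x.1 * f x.2

lemma productCoeff_natCast (f : ℕ → ℝ) {N m : ℕ} (hm : m ≤ N) :
    productCoeff f N m = ∑ n ∈ Icc 1 N, f n * f (n + m) := by
  rw [productCoeff, sum_filter, sum_product]
  refine sum_congr rfl fun n hn => ?_
  have hn' := mem_Icc.mp hn
  have hshift : ∀ p : ℕ, (p : ℤ) - n = m ↔ p = n + m := fun p => by omega
  simp only [hshift, sum_ite_eq', mem_Icc]
  rw [if_pos (by omega)]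

lemma sum_exp_neg_mul_sum_exp (f : ℕ → ℝ) (N : ℕ) (θ : ℝ) :
    (∑ n ∈ Icc 1 N, (f n : ℂ) * exp (I * n * ↑(-θ))) *
        ∑ p ∈ Icc 1 (2 * N), (f p : ℂ) * exp (I * p * θ) =
      ∑ k ∈ Ioo (-(N : ℤ)) (2 * N), (productCoeff f N k : ℂ) * exp (I * k * θ) := by
  have hmaps : ∀ x ∈ Icc 1 N ×ˢ Icc 1 (2 * N), (x.2 : ℤ) - x.1 ∈ Ioo (-(N : ℤ)) (2 * N) := by
    intro x hx
    simp only [mem_product, mem_Icc] at hx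
    simp only [mem_Ioo]
    omega
  calc _ = ∑ x ∈ Icc 1 N ×ˢ Icc 1 (2 * N),
          (f x.1 * f x.2 : ℂ) * exp (I * ((x.2 : ℤ) - x.1 : ℤ) * θ) := by
        rw [sum_mul_sum, sum_product]
        refine sum_congr rfl fun n _ => sum_congr rfl fun p _ => ?_
        rw [mul_mul_mul_comm, ← Complex.exp_add]
        push_cast
        ring_nf
    _ = _ := by
        rw [← sum_fiberwise_of_maps_to hmaps]
        refine sum_congr rfl fun k _ => ?_
        rw [productCoeff, ofReal_sum, sum_mul]
        refine sum_congr rfl fun x hx => ?_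
        rw [(mem_filter.mp hx).2]
        push_cast
        rfl

lemma sum_sq_productCoeff_le (f : ℕ → ℝ) (N : ℕ) (B : ℝ)
    (hB : ∀ θ : ℝ, ‖∑ n ∈ Icc 1 N, (f n : ℂ) * exp (I * n * θ)‖ ≤ B) :
    ∑ k ∈ Ioo (-(N : ℤ)) (2 * N), productCoeff f N k ^ 2 ≤
      B ^ 2 * ∑ p ∈ Icc 1 (2 * N), f p ^ 2 := by
  set M := 3 * N + 1
  set θ : ℕ → ℝ := fun j => 2 * π * j / M
  have hM : (0 : ℝ) < M := by positivity
  have hparseval_product := sum_range_norm_sq_sum_exp (Ioo (-(N : ℤ)) (2 * N))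
    (fun k => (productCoeff f N k : ℂ)) id M (Set.injOn_id _) (fun k hk l hl => by
      simp only [mem_Ioo] at hk hl
      simp only [id, abs_lt, M]
      push_cast
      constructor <;> linarith)
  have hparseval_G := sum_range_norm_sq_sum_exp (Icc 1 (2 * N))
    (fun p => (f p : ℂ)) (fun p => (p : ℤ)) M (Nat.cast_injective.injOn) (fun p hp q hq => by
      simp only [mem_Icc] at hp hq
      simp only [abs_lt, M]
      push_cast
      constructor <;> linarith)
  simp only [id, norm_real, Real.norm_eq_abs, sq_abs, Int.cast_natCast]
    at hparseval_product hparseval_G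
  have hpointwise : ∀ j ∈ range M,
      ‖∑ k ∈ Ioo (-(N : ℤ)) (2 * N), (productCoeff f N k : ℂ) * exp (I * k * ↑(θ j))‖ ^ 2 ≤
        B ^ 2 * ‖∑ p ∈ Icc 1 (2 * N), (f p : ℂ) * exp (I * p * ↑(θ j))‖ ^ 2 := by
    intro j _
    rw [← sum_exp_neg_mul_sum_exp, norm_mul, mul_pow]
    gcongr
    exact hB _
  have hsum := sum_le_sum hpointwise
  rw [← mul_sum, hparseval_product, hparseval_G, mul_left_comm] at hsum
  exact le_of_mul_le_mul_left hsum hM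

lemma sum_abs_correlation_le (f : ℕ → ℝ) (hf : ∀ n, |f n| ≤ 1) (N : ℕ) (B : ℝ)
    (hB : ∀ θ : ℝ, ‖∑ n ∈ Icc 1 N, (f n : ℂ) * exp (I * n * θ)‖ ≤ B) :
    ∑ m ∈ Icc 1 N, |∑ n ∈ Icc 1 N, f n * f (n + m)| ≤ √2 * B * N := by
  have hB0 : 0 ≤ B := (norm_nonneg _).trans (hB 0)
  have hsq : ∑ m ∈ Icc 1 N, (∑ n ∈ Icc 1 N, f n * f (n + m)) ^ 2 ≤ 2 * N * B ^ 2 :=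
    calc ∑ m ∈ Icc 1 N, (∑ n ∈ Icc 1 N, f n * f (n + m)) ^ 2
        = ∑ k ∈ (Icc 1 N).map Nat.castEmbedding, productCoeff f N k ^ 2 := by
          rw [sum_map]
          exact sum_congr rfl fun m hm => by
            rw [Nat.castEmbedding_apply, productCoeff_natCast f (mem_Icc.mp hm).2]
      _ ≤ ∑ k ∈ Ioo (-(N : ℤ)) (2 * N), productCoeff f N k ^ 2 := by
          refine sum_le_sum_of_subset_of_nonneg (fun k hk => ?_) fun _ _ _ => sq_nonneg _
          obtain ⟨m, hm, rfl⟩ := mem_map.mp hk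
          simp only [mem_Icc] at hm
          simp only [Nat.castEmbedding_apply, mem_Ioo]
          omega
      _ ≤ B ^ 2 * ∑ p ∈ Icc 1 (2 * N), f p ^ 2 := sum_sq_productCoeff_le f N B hB
      _ ≤ B ^ 2 * (2 * N) := by
          gcongr
          calc ∑ p ∈ Icc 1 (2 * N), f p ^ 2 ≤ #(Icc 1 (2 * N)) • (1 : ℝ) :=
                sum_le_card_nsmul _ _ _ fun p _ => (sq_le_one_iff_abs_le_one _).mpr (hf p)
            _ = 2 * N := by simp
      _ = 2 * N * B ^ 2 := by ring
  have hCS := sq_sum_le_card_mul_sum_sq (s := Icc 1 N)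
    (f := fun m => |∑ n ∈ Icc 1 N, f n * f (n + m)|)
  simp only [sq_abs, Nat.card_Icc, add_tsub_cancel_right] at hCS
  rw [← pow_le_pow_iff_left₀ (sum_nonneg fun _ _ => abs_nonneg _) (by positivity) two_ne_zero]
  calc _ ≤ (N : ℝ) * (2 * N * B ^ 2) := hCS.trans (by gcongr)
    _ = (√2 * B * N) ^ 2 := by rw [mul_pow, mul_pow, Real.sq_sqrt zero_le_two]; ring

/-- Davenport's estimate implies a quantitative bound for the averaged two-point Chowla
correlations of the Möbius function: there are `C, κ > 0` with
`(1/N) ∑_{m ≤ N} |(1/N) ∑_{n ≤ N} μ(n) μ(n+m)| ≤ C / (log N)^κ` for all `N ≥ 2`. -/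
theorem stmt12
    (hDav : ∀ A : ℝ, 0 < A → ∃ C : ℝ, 0 < C ∧ ∀ N : ℕ, 2 ≤ N → ∀ θ : ℝ,
      ‖∑ n ∈ Finset.Icc 1 N, ((ArithmeticFunction.moebius n : ℤ) : ℂ) *
          Complex.exp (Complex.I * n * θ)‖ ≤ C * N / Real.log N ^ A) :
    ∃ C : ℝ, 0 < C ∧ ∃ κ : ℝ, 0 < κ ∧ ∀ N : ℕ, 2 ≤ N →
      (N : ℝ)⁻¹ * ∑ m ∈ Finset.Icc 1 N,
          |(N : ℝ)⁻¹ * ∑ n ∈ Finset.Icc 1 N,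
              ((ArithmeticFunction.moebius n : ℤ) : ℝ) *
                ((ArithmeticFunction.moebius (n + m) : ℤ) : ℝ)| ≤
        C / Real.log N ^ κ := by
  obtain ⟨C, hC, hDav₁⟩ := hDav 1 one_pos
  refine ⟨√2 * C, by positivity, 1, one_pos, fun N hN => ?_⟩
  have hlog : 0 < Real.log N := Real.log_pos (by exact_mod_cast hN)
  have hcorr := sum_abs_correlation_le (fun n => ((ArithmeticFunction.moebius n : ℤ) : ℝ))
    (fun n => mod_cast ArithmeticFunction.abs_moebius_le_one) N (C * N / Real.log N)
    (fun θ => by simpa [Real.rpow_one] using hDav₁ N hN θ)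
  simp only [abs_mul, abs_inv, Nat.abs_cast, ← mul_sum, Real.rpow_one]
  calc _ ≤ (N : ℝ)⁻¹ * ((N : ℝ)⁻¹ * (√2 * (C * N / Real.log N) * N)) := by gcongr
    _ = √2 * C / Real.log N := by field_simp
end

section
/- Let B = {b_k} be pairwise coprime integers ≥ 2 with Σ 1/b_k < ∞, and let χ_K be the indicator of multiples of b_1,…,b_K with period c = b_1⋯b_K. Then the natural density of {n : χ_K(n) = 1} equals 1 − ∏_{k=1}^{K} (1 − 1/b_k); consequently limsup_N sup_k (1/N) Σ_{n=1}^{N} |χ_B(n+k) − χ_K(n+k)| ≥ 1 − ∏_{k=1}^{K}(1 − 1/b_k) > 0, where χ_B is the indicator of B-free integers shifted appropriately — i.e., the Besicovitch approximation of the multiples-of-B indicator by χ_K is not uniform in shifts. -/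
/-!
The multiples of `b_0, …, b_{K-1}` form a set of period `c = ∏ b_k`, and by the Chinese remainder
theorem exactly `∏ (b_k - 1)` residues modulo `c` avoid all of them; hence their density is
`1 - ∏ (1 - 1/b_k)`. For the lower bound, fix `N` and use the Chinese remainder theorem once more,
now for the pairwise coprime moduli `b_0, …, b_{K+N}`, to find a shift `j` divisible by every
`b_k` with `k < K` and with `b_{K+n} ∣ j + n` for `n ≤ N`. On the window `j + 1, …, j + N` the
indicator `χ_B` vanishes while `χ_K` agrees with its values on `1, …, N`, so the shifted average
there is the proportion of multiples in `[1, N]`, which tends to the density.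
-/

open Filter Finset Function Topology

namespace Function.Periodic

variable {p : ℕ → Prop} [DecidablePred p] {c : ℕ}

theorem count_add (hp : Periodic p c) (n : ℕ) :
    Nat.count p (c + n) = Nat.count p c + Nat.count p n := by
  rw [Nat.count_add]
  simp only [add_comm c, show ∀ x, p (x + c) = p x from hp]

theorem count_mul_add (hp : Periodic p c) (q n : ℕ) :
    Nat.count p (q * c + n) = q * Nat.count p c + Nat.count p n := by
  induction q with
  | zero => simp
  | succ q ih => rw [add_one_mul, add_comm (q * c), add_assoc, hp.count_add, ih]; ring

theorem count_comp_add_one (hp : Periodic p c) :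
    Nat.count (fun n => p (n + 1)) c = Nat.count p c := by
  have h := Nat.count_succ' p c
  have h0 : p c = p 0 := by simpa using hp 0
  simp only [Nat.count_succ, h0] at h
  omega

theorem abs_count_sub_mul_le (hp : Periodic p c) (hc : 0 < c) (N : ℕ) :
    |(Nat.count p N : ℝ) - N * (Nat.count p c / c)| ≤ Nat.count p c := by
  have hr : N % c < c := Nat.mod_lt N hc
  have hcR : (0 : ℝ) < c := by exact_mod_cast hc
  have hsplit : (Nat.count p N : ℝ) - N * (Nat.count p c / c) =
      Nat.count p (N % c) - (N % c : ℕ) * (Nat.count p c / c) := by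
    conv_lhs => rw [← Nat.div_add_mod' N c, hp.count_mul_add]
    push_cast
    field_simp
    ring
  rw [hsplit]
  apply abs_sub_le_of_nonneg_of_le (by positivity) (by exact_mod_cast Nat.count_monotone p hr.le)
    (by positivity)
  rw [mul_div_assoc', div_le_iff₀ hcR, mul_comm]
  gcongr

theorem tendsto_count_div (hp : Periodic p c) (hc : 0 < c) :
    Tendsto (fun N => (Nat.count p N : ℝ) / N) atTop (𝓝 (Nat.count p c / c)) := by
  have herr : Tendsto (fun N : ℕ => ((Nat.count p N : ℝ) - N * (Nat.count p c / c)) / N) atTop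
      (𝓝 0) := by
    refine squeeze_zero_norm (fun N => ?_)
      (tendsto_const_div_atTop_nhds_zero_nat (Nat.count p c : ℝ))
    rw [norm_div, Real.norm_natCast]
    exact div_le_div_of_nonneg_right (hp.abs_count_sub_mul_le hc N) N.cast_nonneg
  rw [← zero_add ((Nat.count p c : ℝ) / c)]
  refine (herr.add_const _).congr' ?_
  filter_upwards [eventually_ne_atTop 0] with N hN
  field_simp
  ring

theorem tendsto_card_filter_Icc_div (hp : Periodic p c) (hc : 0 < c) :
    Tendsto (fun N => (#{n ∈ Icc 1 N | p n} : ℝ) / N) atTop (𝓝 (Nat.count p c / c)) := by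
  have hshift : ∀ N, #{n ∈ Icc 1 N | p n} = Nat.count (fun n => p (n + 1)) N := by
    intro N
    rw [Nat.count_eq_card_filter_range, ← Ico_add_one_right_eq_Icc, range_eq_Ico,
      show Ico 1 (N + 1) = (Ico 0 N).map (addRightEmbedding 1) by rw [map_add_right_Ico, zero_add],
      filter_map, card_map]
    rfl
  simp only [hshift]
  rw [← hp.count_comp_add_one]
  exact (hp.add_const 1).tendsto_count_div hc

end Function.Periodic

namespace Nat

theorem card_filter_range_mul_of_coprime {m n : ℕ} (hmn : m.Coprime n) (hm : m ≠ 0) (hn : n ≠ 0)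
    (p q : ℕ → Prop) [DecidablePred p] [DecidablePred q] :
    #{x ∈ range (m * n) | p (x % m) ∧ q (x % n)} =
      #{x ∈ range m | p x} * #{y ∈ range n | q y} := by
  rw [← card_product]
  refine card_nbij' (fun x => (x % m, x % n)) (fun y => chineseRemainder hmn y.1 y.2) ?_ ?_ ?_ ?_
  · intro x hx
    simp only [coe_filter, mem_range, Set.mem_ofPred_eq] at hx
    simp [hx, mod_lt _ (pos_of_ne_zero hm), mod_lt _ (pos_of_ne_zero hn)]
  · rintro ⟨y, z⟩ hyz
    simp only [coe_product, coe_filter, mem_range, Set.mem_prod, Set.mem_ofPred_eq] at hyz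
    have h := (chineseRemainder hmn y z).2
    simp only [coe_filter, mem_range, Set.mem_ofPred_eq]
    rw [h.1, h.2, mod_eq_of_lt hyz.1.1, mod_eq_of_lt hyz.2.1]
    exact ⟨chineseRemainder_lt_mul hmn y z hm hn, hyz.1.2, hyz.2.2⟩
  · intro x hx
    simp only [coe_filter, mem_range, Set.mem_ofPred_eq] at hx
    exact ModEq.eq_of_lt_of_lt
      (chineseRemainder_modEq_unique hmn (mod_modEq x m).symm (mod_modEq x n).symm).symm
      (chineseRemainder_lt_mul hmn _ _ hm hn) hx.1
  · rintro ⟨y, z⟩ hyz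
    simp only [coe_product, coe_filter, mem_range, Set.mem_prod, Set.mem_ofPred_eq] at hyz
    have h := (chineseRemainder hmn y z).2
    simp only [Prod.mk.injEq]
    exact ⟨Eq.trans h.1 (mod_eq_of_lt hyz.1.1), Eq.trans h.2 (mod_eq_of_lt hyz.2.1)⟩

theorem card_filter_range_not_dvd_self (m : ℕ) : #{x ∈ range m | ¬ m ∣ x} = m - 1 := by
  rcases Nat.eq_zero_or_pos m with rfl | hm
  · simp
  rw [show {x ∈ range m | ¬ m ∣ x} = (range m).erase 0 by
    ext x
    simp only [mem_filter, mem_range, mem_erase]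
    exact ⟨fun h => ⟨fun h0 => h.2 (h0 ▸ dvd_zero m), h.1⟩,
      fun h => ⟨h.2, fun hd => h.1 (eq_zero_of_dvd_of_lt hd h.2)⟩⟩]
  simp [card_erase_of_mem, hm]

theorem card_filter_range_prod_forall_not_dvd {ι : Type*} (s : Finset ι) (b : ι → ℕ)
    (hb : ∀ i ∈ s, b i ≠ 0) (hcop : (s : Set ι).Pairwise (Coprime on b)) :
    #{x ∈ range (∏ i ∈ s, b i) | ∀ i ∈ s, ¬ b i ∣ x} = ∏ i ∈ s, (b i - 1) := by
  induction s using Finset.cons_induction with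
  | empty => simp
  | cons a s has ih =>
    simp only [mem_cons, forall_eq_or_imp] at hb ⊢
    have hcop' : Coprime (b a) (∏ i ∈ s, b i) := Coprime.prod_right fun i hi =>
      hcop (by simp) (by simp [hi]) (fun h => has (h ▸ hi))
    have hdvd : ∀ i ∈ s, b i ∣ ∏ i ∈ s, b i := fun i hi => dvd_prod_of_mem b hi
    simp_rw [prod_cons, ← card_filter_range_not_dvd_self (b a),
      ← ih hb.2 (hcop.mono (by simp)),
      ← card_filter_range_mul_of_coprime hcop' hb.1 (prod_ne_zero_iff.mpr hb.2)]
    congr 1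
    refine filter_congr fun x _ => and_congr (not_congr (dvd_mod_iff dvd_rfl).symm) ?_
    exact forall₂_congr fun i hi => not_congr (dvd_mod_iff (hdvd i hi)).symm

theorem exists_dvd_and_dvd_add_of_pairwise_coprime (b : ℕ → ℕ) (hb : ∀ k, b k ≠ 0)
    (hcop : Pairwise (Coprime on b)) (K N : ℕ) :
    ∃ j, (∀ k < K, b k ∣ j) ∧ ∀ n ≤ N, b (K + n) ∣ j + n := by
  -- `n * (b - 1)` is a natural-number representative of `-n` modulo `b`.
  obtain ⟨j, hj⟩ := chineseRemainderOfFinset (fun i => (i - K) * (b i - 1)) b (range (K + N + 1))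
    (fun i _ => hb i) (hcop.set_pairwise _)
  refine ⟨j, fun k hk => ?_, fun n hn => ?_⟩
  · have := hj k (mem_range.mpr (by omega))
    rwa [Nat.sub_eq_zero_of_le hk.le, zero_mul, modEq_zero_iff_dvd] at this
  · have := (hj (K + n) (mem_range.mpr (by omega))).add_right n
    rw [Nat.add_sub_cancel_left, ← mul_add_one,
      Nat.sub_add_cancel (one_le_iff_ne_zero.mpr (hb _))] at this
    exact modEq_zero_iff_dvd.mp (this.trans (modEq_zero_iff_dvd.mpr (dvd_mul_left _ _)))

end Nat

theorem inv_mul_sum_Icc_abs_sub_le_one {f g : ℕ → ℝ} (h : ∀ m, |f m - g m| ≤ 1) (N j : ℕ) :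
    (N : ℝ)⁻¹ * ∑ n ∈ Icc 1 N, |f (n + j) - g (n + j)| ≤ 1 := by
  refine inv_mul_le_one_of_le₀ ?_ N.cast_nonneg
  calc ∑ n ∈ Icc 1 N, |f (n + j) - g (n + j)| ≤ ∑ _n ∈ Icc 1 N, (1 : ℝ) :=
        sum_le_sum fun n _ => h _
    _ = N := by simp

theorem count_exists_dvd_div_prod (b : ℕ → ℕ) (hb : ∀ k, b k ≠ 0)
    (hcop : Pairwise (Nat.Coprime on b)) (K : ℕ) :
    (Nat.count (fun n => ∃ k < K, b k ∣ n) (∏ k ∈ range K, b k) : ℝ) / ∏ k ∈ range K, b k =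
      1 - ∏ k ∈ range K, (1 - 1 / (b k : ℝ)) := by
  set c := ∏ k ∈ range K, b k
  have hcount :
      (Nat.count (fun n => ∃ k < K, b k ∣ n) c : ℝ) = c - ∏ k ∈ range K, (b k - 1 : ℕ) := by
    have h := card_filter_add_card_filter_not (s := range c) (fun n => ∃ k < K, b k ∣ n)
    rw [card_range, filter_congr (p := fun n => ¬ ∃ k < K, b k ∣ n)
        (q := fun n => ∀ k ∈ range K, ¬ b k ∣ n) (by simp),
      Nat.card_filter_range_prod_forall_not_dvd (range K) b (fun k _ => hb k)
        (hcop.set_pairwise _)] at h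
    rw [Nat.count_eq_card_filter_range, eq_sub_iff_add_eq]
    exact_mod_cast h
  have hfactor : ∀ k ∈ range K, ((b k - 1 : ℕ) : ℝ) / b k = 1 - 1 / b k := fun k _ => by
    have := hb k
    rw [Nat.cast_sub (by omega), Nat.cast_one, sub_div, div_self (by exact_mod_cast this)]
  have hc : (c : ℝ) ≠ 0 := by simpa [c, prod_ne_zero_iff] using fun k _ => hb k
  rw [← prod_congr rfl hfactor, prod_div_distrib, hcount, sub_div, div_self hc, Nat.cast_prod,
    Nat.cast_prod]

theorem prod_one_sub_one_div_lt_one {ι : Type*} {s : Finset ι} (hs : s.Nonempty) (b : ι → ℕ)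
    (hb : ∀ i ∈ s, 1 < b i) : ∏ i ∈ s, (1 - 1 / (b i : ℝ)) < 1 := by
  have hfactor : ∀ i ∈ s, 0 < 1 - 1 / (b i : ℝ) ∧ 1 - 1 / (b i : ℝ) < 1 := fun i hi => by
    have : (1 : ℝ) < b i := by exact_mod_cast hb i hi
    exact ⟨sub_pos.mpr ((div_lt_one (by linarith)).mpr this), sub_lt_self 1 (by positivity)⟩
  calc ∏ i ∈ s, (1 - 1 / (b i : ℝ)) < ∏ _i ∈ s, (1 : ℝ) :=
        prod_lt_prod_of_nonempty (fun i hi => (hfactor i hi).1) (fun i hi => (hfactor i hi).2) hs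
    _ = 1 := prod_const_one

open scoped Classical in
theorem card_filter_Icc_div_le_iSup_shift (b : ℕ → ℕ) (hb : ∀ k, b k ≠ 0)
    (hcop : Pairwise (Nat.Coprime on b)) (K N : ℕ) (χB χK : ℕ → ℝ)
    (hχB : ∀ n, χB n = if ∀ k, ¬ b k ∣ n then 1 else 0)
    (hχK : ∀ n, χK n = if ∃ k < K, b k ∣ n then 1 else 0) :
    (#{n ∈ Icc 1 N | ∃ k < K, b k ∣ n} : ℝ) / N ≤
      ⨆ j : ℕ, (N : ℝ)⁻¹ * ∑ n ∈ Icc 1 N, |χB (n + j) - χK (n + j)| := by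
  obtain ⟨j, hjK, hjB⟩ := Nat.exists_dvd_and_dvd_add_of_pairwise_coprime b hb hcop K N
  have hterm : ∀ n ∈ Icc 1 N,
      |χB (n + j) - χK (n + j)| = if ∃ k < K, b k ∣ n then 1 else 0 := by
    intro n hn
    have hB : χB (n + j) = 0 := by
      rw [hχB, if_neg]
      exact fun h => h (K + n) (add_comm n j ▸ hjB n (mem_Icc.mp hn).2)
    have hK : (∃ k < K, b k ∣ n + j) ↔ ∃ k < K, b k ∣ n :=
      exists_congr fun k => and_congr_right fun hk => Nat.dvd_add_left (hjK k hk)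
    rw [hB, hχK, zero_sub, abs_neg, if_congr hK rfl rfl]
    split_ifs <;> simp
  have hbdd : BddAbove (Set.range fun j : ℕ =>
      (N : ℝ)⁻¹ * ∑ n ∈ Icc 1 N, |χB (n + j) - χK (n + j)|) := by
    refine ⟨1, Set.forall_mem_range.mpr fun j =>
      inv_mul_sum_Icc_abs_sub_le_one (fun m => ?_) N j⟩
    rw [hχB, hχK]
    split_ifs <;> norm_num
  calc (#{n ∈ Icc 1 N | ∃ k < K, b k ∣ n} : ℝ) / N
      = (N : ℝ)⁻¹ * ∑ n ∈ Icc 1 N, |χB (n + j) - χK (n + j)| := by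
        rw [sum_congr rfl hterm, sum_boole, div_eq_inv_mul]
    _ ≤ _ := le_ciSup hbdd j

open scoped Classical in
theorem stmt15_general (b : ℕ → ℕ) (hb : ∀ k, 2 ≤ b k)
    (hcop : ∀ k l, k ≠ l → Nat.Coprime (b k) (b l))
    (K : ℕ) (hK : 1 ≤ K)
    (χB χK : ℕ → ℝ)
    (hχB : ∀ n, χB n = if ∀ k, ¬ b k ∣ n then 1 else 0)
    (hχK : ∀ n, χK n = if ∃ k < K, b k ∣ n then 1 else 0) :
    Tendsto (fun N : ℕ =>
        (((Finset.Icc 1 N).filter fun n => ∃ k < K, b k ∣ n).card : ℝ) / N) atTop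
      (nhds (1 - ∏ k ∈ Finset.range K, (1 - 1 / (b k : ℝ)))) ∧
      (1 - ∏ k ∈ Finset.range K, (1 - 1 / (b k : ℝ)) ≤
        limsup (fun N : ℕ => ⨆ j : ℕ,
          (N : ℝ)⁻¹ * ∑ n ∈ Finset.Icc 1 N, |χB (n + j) - χK (n + j)|) atTop) ∧
      0 < 1 - ∏ k ∈ Finset.range K, (1 - 1 / (b k : ℝ)) := by
  have hb0 : ∀ k, b k ≠ 0 := fun k => (lt_of_lt_of_le two_pos (hb k)).ne'
  have hperiodic : Periodic (fun n => ∃ k < K, b k ∣ n) (∏ k ∈ range K, b k) := fun n =>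
    propext <| exists_congr fun k => and_congr_right fun hk =>
      Nat.dvd_add_left (dvd_prod_of_mem b (mem_range.mpr hk))
  have hdensity :=
    hperiodic.tendsto_card_filter_Icc_div (prod_pos fun k _ => pos_of_ne_zero (hb0 k))
  rw [count_exists_dvd_div_prod b hb0 hcop K] at hdensity
  refine ⟨hdensity, ?_, ?_⟩
  · rw [← hdensity.limsup_eq]
    refine limsup_le_limsup (Eventually.of_forall fun N =>
        card_filter_Icc_div_le_iSup_shift b hb0 hcop K N χB χK hχB hχK)
      hdensity.isCoboundedUnder_le (isBoundedUnder_of ⟨1, fun N =>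
        ciSup_le fun j => inv_mul_sum_Icc_abs_sub_le_one (fun m => ?_) N j⟩)
    rw [hχB, hχK]
    split_ifs <;> norm_num
  · exact sub_pos.mpr (prod_one_sub_one_div_lt_one (nonempty_range_iff.mpr (by omega)) b
      fun k _ => hb k)

open scoped Classical in
/-- The multiples of `b_0, …, b_{K-1}` (pairwise coprime, `≥ 2`) have natural density
`1 − ∏_{k<K} (1 − 1/b_k)`, and consequently the Besicovitch approximation of the B-free
indicator by the periodic indicator `χ_K` is not uniform in shifts:
`limsup_N sup_j (1/N) ∑_{n ≤ N} |χ_B(n+j) − χ_K(n+j)| ≥ 1 − ∏_{k<K}(1 − 1/b_k) > 0`. -/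
theorem stmt15 (b : ℕ → ℕ) (hb : ∀ k, 2 ≤ b k)
    (hcop : ∀ k l, k ≠ l → Nat.Coprime (b k) (b l))
    (hsum : Summable fun k => (1 : ℝ) / b k) (K : ℕ) (hK : 1 ≤ K)
    (χB χK : ℕ → ℝ)
    (hχB : ∀ n, χB n = if ∀ k, ¬ b k ∣ n then 1 else 0)
    (hχK : ∀ n, χK n = if ∃ k < K, b k ∣ n then 1 else 0) :
    Tendsto (fun N : ℕ =>
        (((Finset.Icc 1 N).filter fun n => ∃ k < K, b k ∣ n).card : ℝ) / N) atTop
      (nhds (1 - ∏ k ∈ Finset.range K, (1 - 1 / (b k : ℝ)))) ∧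
      (1 - ∏ k ∈ Finset.range K, (1 - 1 / (b k : ℝ)) ≤
        limsup (fun N : ℕ => ⨆ j : ℕ,
          (N : ℝ)⁻¹ * ∑ n ∈ Finset.Icc 1 N, |χB (n + j) - χK (n + j)|) atTop) ∧
      0 < 1 - ∏ k ∈ Finset.range K, (1 - 1 / (b k : ℝ)) :=
  stmt15_general b hb hcop K hK χB χK hχB hχK
end

section
/- Under the assumption that the Liouville sequence λ is generic for the Bernoulli(1/2) measure on {−1,1}^ℕ (a consequence of the Chowla conjecture), for the Bernoulli measure B on {−1,1}^ℕ and the random Mertens function M_ω(x) = Σ_{n≤x} ω(n): for B-almost every ω and every τ > 1/2, sup_{x^τ ≤ h ≤ x} (1/h) |M_ω(x+h) − M_ω(x)| → 0 as x → ∞. -/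
/-!
Each `ω n` is 1-sub-Gaussian, so by Hoeffding `P(|M(N)| ≥ N^a) ≤ 2 exp(-N^(2a-1)/2)`, which is
summable when `a > 1/2`. Borel–Cantelli (over countably many exponents `a ↓ 1/2`) then gives,
almost surely, `|M(x)| ≤ x^a` eventually for every `a > 1/2`. Choosing `1/2 < a < τ`, for
`x^τ ≤ h ≤ x` the crude bound `|M(x+h) - M(x)| / h ≤ 2 (2x)^a / x^τ` already tends to `0`, so no
maximal inequality is needed.
-/

open MeasureTheory ProbabilityTheory Filter Real Asymptotics
open scoped ENNReal NNReal Topology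

lemma summable_exp_neg_mul_rpow {b δ : ℝ} (hb : 0 < b) (hδ : 0 < δ) :
    Summable fun N : ℕ => exp (-b * (N : ℝ) ^ δ) := by
  have hN : Tendsto (fun N : ℕ => (N : ℝ) ^ δ) atTop atTop :=
    (tendsto_rpow_atTop hδ).comp tendsto_natCast_atTop_atTop
  refine summable_of_isBigO_nat (Real.summable_nat_rpow.mpr (by norm_num : (-2 : ℝ) < -1)) ?_
  refine ((isLittleO_exp_neg_mul_rpow_atTop hb (-2 / δ)).comp_tendsto hN).isBigO.congr_right
    fun N => ?_
  rw [Function.comp_apply, ← rpow_mul (Nat.cast_nonneg N)]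
  field_simp

namespace ProbabilityTheory

variable {Ω : Type*} [MeasurableSpace Ω] {μ : Measure Ω}

lemma hasSubgaussianMGF_id_rademacher :
    HasSubgaussianMGF id 1
      ((2⁻¹ : ℝ≥0∞) • Measure.dirac (1 : ℝ) + (2⁻¹ : ℝ≥0∞) • Measure.dirac (-1 : ℝ)) := by
  have hint (t y : ℝ) :
      Integrable (fun x : ℝ => exp (t * x)) ((2⁻¹ : ℝ≥0∞) • Measure.dirac y) :=
    (integrable_dirac (by finiteness)).smul_measure (by simp)
  refine ⟨fun t => (hint t 1).add_measure (hint t (-1)), fun t => ?_⟩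
  calc mgf id _ t = cosh t := by
        simp only [mgf, id, integral_add_measure (hint t 1) (hint t (-1)), integral_smul_measure,
          ENNReal.toReal_inv, ENNReal.toReal_ofNat, integral_dirac, mul_one, smul_eq_mul, mul_neg,
          cosh_eq]
        ring
    _ ≤ exp (t ^ 2 / 2) := cosh_le_exp_half_sq t
    _ = exp ((1 : ℝ≥0) * t ^ 2 / 2) := by simp

lemma hasSubgaussianMGF_of_map_eq_rademacher {X : Ω → ℝ} (hX : AEMeasurable X μ)
    (h : μ.map X = (2⁻¹ : ℝ≥0∞) • Measure.dirac 1 + (2⁻¹ : ℝ≥0∞) • Measure.dirac (-1)) :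
    HasSubgaussianMGF X 1 μ := by
  rw [← HasSubgaussianMGF.id_map_iff hX, h]
  exact hasSubgaussianMGF_id_rademacher

lemma HasSubgaussianMGF.isFiniteMeasure {X : Ω → ℝ} {c : ℝ≥0} (h : HasSubgaussianMGF X c μ) :
    IsFiniteMeasure μ :=
  (integrable_const_iff.mp (by simpa using h.integrable_exp_mul 0)).resolve_left one_ne_zero

lemma HasSubgaussianMGF.measureReal_le_abs_le {X : Ω → ℝ} {c : ℝ≥0}
    (h : HasSubgaussianMGF X c μ) {ε : ℝ} (hε : 0 ≤ ε) :
    μ.real {u | ε ≤ |X u|} ≤ 2 * exp (-ε ^ 2 / (2 * c)) := by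
  have := h.isFiniteMeasure
  calc μ.real {u | ε ≤ |X u|} ≤ μ.real ({u | ε ≤ X u} ∪ {u | ε ≤ (-X) u}) :=
        measureReal_mono fun u (hu : ε ≤ |X u|) => le_abs.mp hu
    _ ≤ μ.real {u | ε ≤ X u} + μ.real {u | ε ≤ (-X) u} := measureReal_union_le _ _
    _ ≤ 2 * exp (-ε ^ 2 / (2 * c)) := by
        linarith [h.measure_ge_le hε, h.neg.measure_ge_le hε]

lemma ae_eventually_abs_lt_rpow_of_hasSubgaussianMGF {S : ℕ → Ω → ℝ}
    (hS : ∀ N : ℕ, HasSubgaussianMGF (S N) N μ) {a : ℝ} (ha : 1 / 2 < a) :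
    ∀ᵐ u ∂μ, ∀ᶠ N in atTop, |S N u| < (N : ℝ) ^ a := by
  have hexponent (N : ℕ) :
      -((N : ℝ) ^ a) ^ 2 / (2 * ((N : ℝ≥0) : ℝ)) = -2⁻¹ * (N : ℝ) ^ (2 * a - 1) := by
    rcases N.eq_zero_or_pos with rfl | hN
    -- at `N = 0` both sides vanish, the left one because `x / 0 = 0`
    · simp [zero_rpow (by linarith : a ≠ 0), zero_rpow (by linarith : 2 * a - 1 ≠ 0)]
    · rw [← rpow_natCast, ← rpow_mul (by positivity), rpow_sub (by positivity), rpow_one]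
      push_cast
      rw [mul_comm a]
      ring
  have htail (N : ℕ) : μ {u | (N : ℝ) ^ a ≤ |S N u|}
      ≤ ENNReal.ofReal (2 * exp (-2⁻¹ * (N : ℝ) ^ (2 * a - 1))) := by
    have := (hS N).isFiniteMeasure
    rw [← ofReal_measureReal, ← hexponent]
    exact ENNReal.ofReal_le_ofReal ((hS N).measureReal_le_abs_le (by positivity))
  have hsum : ∑' N : ℕ, μ {u | (N : ℝ) ^ a ≤ |S N u|} ≠ ∞ :=
    ne_top_of_le_ne_top
      (((summable_exp_neg_mul_rpow (by norm_num) (by linarith)).mul_left 2).tsum_ofReal_ne_top)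
      (ENNReal.tsum_le_tsum htail)
  filter_upwards [ae_eventually_notMem hsum] with u hu
  exact hu.mono fun N hN => not_le.mp hN

lemma ae_forall_eventually_abs_lt_rpow_of_hasSubgaussianMGF {S : ℕ → Ω → ℝ}
    (hS : ∀ N : ℕ, HasSubgaussianMGF (S N) N μ) :
    ∀ᵐ u ∂μ, ∀ a : ℝ, 1 / 2 < a → ∀ᶠ N in atTop, |S N u| < (N : ℝ) ^ a := by
  have hseq : ∀ᵐ u ∂μ, ∀ m : ℕ, ∀ᶠ N in atTop, |S N u| < (N : ℝ) ^ (1 / 2 + 1 / (m + 1 : ℝ)) :=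
    ae_all_iff.mpr fun m => ae_eventually_abs_lt_rpow_of_hasSubgaussianMGF hS
      (lt_add_of_pos_right _ (by positivity))
  filter_upwards [hseq] with u hu a ha
  obtain ⟨m, hm⟩ := exists_nat_one_div_lt (sub_pos.mpr ha)
  filter_upwards [hu m, eventually_ge_atTop 1] with N hN hN1
  exact hN.trans_le (rpow_le_rpow_of_exponent_le (by exact_mod_cast hN1) (by linarith))

end ProbabilityTheory

lemma tendsto_iSup_abs_sub_div_of_abs_le_rpow {f : ℝ → ℝ} {a τ : ℝ} (ha : 0 ≤ a) (haτ : a < τ)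
    (hf : ∀ᶠ x in atTop, |f x| ≤ x ^ a) :
    Tendsto (fun x => ⨆ h ∈ Set.Icc (x ^ τ) x, |f (x + h) - f x| / h) atTop (𝓝 0) := by
  obtain ⟨x₀, hx₀⟩ := eventually_atTop.mp hf
  have hbound : Tendsto (fun x : ℝ => 2 * 2 ^ a * x ^ (a - τ)) atTop (𝓝 0) := by
    simpa [neg_sub] using (tendsto_rpow_neg_atTop (sub_pos.mpr haτ)).const_mul (2 * 2 ^ a)
  refine tendsto_of_tendsto_of_tendsto_of_le_of_le' tendsto_const_nhds hbound ?_ ?_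
  · filter_upwards [eventually_gt_atTop 0] with x hx
    exact Real.iSup_nonneg fun h => Real.iSup_nonneg fun hh =>
      div_nonneg (abs_nonneg _) ((rpow_pos_of_pos hx τ).le.trans hh.1)
  · filter_upwards [eventually_gt_atTop 0, eventually_ge_atTop x₀] with x hx hxx₀
    refine Real.iSup_le (fun h => Real.iSup_le (fun hh => ?_) (by positivity)) (by positivity)
    have hτh : 0 < x ^ τ := rpow_pos_of_pos hx τ
    have h2x (y : ℝ) (hy : x ≤ y) (hy2 : y ≤ 2 * x) : |f y| ≤ (2 * x) ^ a :=
      (hx₀ y (hxx₀.trans hy)).trans (rpow_le_rpow (hx.le.trans hy) hy2 ha)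
    calc |f (x + h) - f x| / h ≤ ((2 * x) ^ a + (2 * x) ^ a) / x ^ τ := by
          refine div_le_div₀ (by positivity) ((abs_sub _ _).trans (add_le_add ?_ ?_)) hτh hh.1
          · exact h2x _ (by linarith [hτh.trans_le hh.1]) (by linarith [hh.2])
          · exact h2x _ le_rfl (by linarith)
      _ = 2 * 2 ^ a * x ^ (a - τ) := by
          rw [mul_rpow zero_le_two hx.le, rpow_sub hx]
          ring

theorem stmt19_general {Ω : Type*} [MeasurableSpace Ω] (P : Measure Ω)
    (ω : ℕ → Ω → ℝ) (hmeas : ∀ k, Measurable (ω k))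
    (hindep : iIndepFun ω P)
    (hdist : ∀ k, Measure.map (ω k) P =
      (2⁻¹ : ENNReal) • Measure.dirac (1 : ℝ) + (2⁻¹ : ENNReal) • Measure.dirac (-1 : ℝ))
    (M : Ω → ℝ → ℝ) (hM : ∀ u (x : ℝ), M u x = ∑ n ∈ Finset.Icc 1 ⌊x⌋₊, ω n u) :
    ∀ᵐ u ∂P, ∀ τ : ℝ, 1 / 2 < τ →
      Tendsto (fun x : ℝ => ⨆ h ∈ Set.Icc (x ^ τ) x, |M u (x + h) - M u x| / h)
        atTop (nhds 0) := by
  have hsubG (N : ℕ) : HasSubgaussianMGF (fun u => ∑ n ∈ Finset.Icc 1 N, ω n u) N P := by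
    simpa using HasSubgaussianMGF.sum_of_iIndepFun hindep (c := fun _ => 1)
      (s := Finset.Icc 1 N) fun k _ => hasSubgaussianMGF_of_map_eq_rademacher
        (hmeas k).aemeasurable (hdist k)
  filter_upwards [ae_forall_eventually_abs_lt_rpow_of_hasSubgaussianMGF hsubG] with u hu τ hτ
  obtain ⟨a, ha, haτ⟩ := exists_between hτ
  refine tendsto_iSup_abs_sub_div_of_abs_le_rpow (by linarith) haτ ?_
  filter_upwards [tendsto_nat_floor_atTop.eventually (hu a ha), eventually_ge_atTop 0]
    with x hx hx0
  rw [hM]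
  exact hx.le.trans (rpow_le_rpow (Nat.cast_nonneg _) (Nat.floor_le hx0) (by linarith))

/-- For i.i.d. symmetric ±1 coordinates (the Bernoulli(1/2) measure, as arises for the
Liouville function under the Chowla conjecture), the random Mertens function
`M_ω(x) = ∑_{n ≤ x} ω(n)` satisfies, almost surely: for every `τ > 1/2`,
`sup_{x^τ ≤ h ≤ x} (1/h) |M_ω(x+h) − M_ω(x)| → 0` as `x → ∞`. -/
theorem stmt19 {Ω : Type*} [MeasurableSpace Ω] (P : Measure Ω) [IsProbabilityMeasure P]
    (ω : ℕ → Ω → ℝ) (hmeas : ∀ k, Measurable (ω k))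
    (hindep : iIndepFun ω P)
    (hdist : ∀ k, Measure.map (ω k) P =
      (2⁻¹ : ENNReal) • Measure.dirac (1 : ℝ) + (2⁻¹ : ENNReal) • Measure.dirac (-1 : ℝ))
    (M : Ω → ℝ → ℝ) (hM : ∀ u (x : ℝ), M u x = ∑ n ∈ Finset.Icc 1 ⌊x⌋₊, ω n u) :
    ∀ᵐ u ∂P, ∀ τ : ℝ, 1 / 2 < τ →
      Tendsto (fun x : ℝ => ⨆ h ∈ Set.Icc (x ^ τ) x, |M u (x + h) - M u x| / h)
        atTop (nhds 0) :=
  stmt19_general P ω hmeas hindep hdist M hM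
end
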